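/- arXiv:2412.14357 — 2 statements merged into one kernel-verified Lean document; each statement's English description precedes it below -/
import Mathlib

section
/- Let H be a real Hilbert space with inner product E, let e₁, …, eₙ ∈ H, γ > 0, λ > 0, and y₁, …, yₙ ∈ ℝ. Then the minimizer over g ∈ H of (1/n) ∑_{i=1}^n (yᵢ - E(g, γ eᵢ))² + λ E(g, g) exists, is unique, and lies in the span of {e₁, …, eₙ}; explicitly it equals ∑_{i=1}^n cᵢ γ eᵢ where c = (G + nλ I)⁻¹ y with Gram matrix G_{ij} = γ² E(eᵢ, eⱼ). -/
open scoped RealInnerProductSpace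
open Matrix

/-!
Write `v i = γ • e i`, `μ = n λ` and `f = ∑ cᵢ vᵢ`. The equation `(G + μ I) c = y` says exactly
that the residuals of `f` are `yᵢ - ⟪f, vᵢ⟫ = μ cᵢ`. Expanding the objective around `f`, the
linear terms in `g - f` then cancel, leaving
`n F g = n F f + ∑ ⟪g - f, vᵢ⟫² + μ ‖g - f‖²`,
so `f` is the unique minimizer, and it lies in the span of the `eᵢ` by construction.
-/

section RidgeRegression

variable {ι H : Type*} [Fintype ι] [NormedAddCommGroup H] [InnerProductSpace ℝ H]

def ridgeLoss (v : ι → H) (y : ι → ℝ) (μ : ℝ) (g : H) : ℝ :=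
  ∑ i, (y i - ⟪g, v i⟫) ^ 2 + μ * ⟪g, g⟫

lemma Matrix.posDef_gram_add_smul_one [DecidableEq ι] (v : ι → H) {μ : ℝ} (hμ : 0 < μ) :
    (gram ℝ v + μ • (1 : Matrix ι ι ℝ)).PosDef :=
  PosDef.posSemidef_add (posSemidef_gram ℝ v) (PosDef.one.smul hμ)

lemma inner_sum_smul_eq_gram_mulVec (v : ι → H) (c : ι → ℝ) (j : ι) :
    ⟪∑ i, c i • v i, v j⟫ = (gram ℝ v *ᵥ c) j := by
  simp only [sum_inner, real_inner_smul_left, mulVec, dotProduct, gram_apply]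
  exact Finset.sum_congr rfl fun i _ => by rw [real_inner_comm, mul_comm]

lemma sub_inner_sum_smul_eq_mul [DecidableEq ι] {v : ι → H} {y c : ι → ℝ} {μ : ℝ}
    (hc : (gram ℝ v + μ • (1 : Matrix ι ι ℝ)) *ᵥ c = y) (j : ι) :
    y j - ⟪∑ i, c i • v i, v j⟫ = μ * c j := by
  rw [← hc, inner_sum_smul_eq_gram_mulVec, add_mulVec, smul_mulVec, one_mulVec]
  simp

lemma ridgeLoss_eq_add [DecidableEq ι] {v : ι → H} {y c : ι → ℝ} {μ : ℝ}
    (hc : (gram ℝ v + μ • (1 : Matrix ι ι ℝ)) *ᵥ c = y) (g : H) :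
    ridgeLoss v y μ g = ridgeLoss v y μ (∑ i, c i • v i)
      + ∑ i, ⟪g - ∑ i, c i • v i, v i⟫ ^ 2 + μ * ⟪g - ∑ i, c i • v i, g - ∑ i, c i • v i⟫ := by
  set f := ∑ i, c i • v i with hf
  set d := g - f
  have hres (i : ι) : y i - ⟪g, v i⟫ = μ * c i - ⟪d, v i⟫ := by
    rw [← sub_inner_sum_smul_eq_mul hc i, ← hf, inner_sub_left]; ring
  have hgg : ⟪g, g⟫ = ⟪f, f⟫ + 2 * ⟪f, d⟫ + ⟪d, d⟫ := by
    rw [← add_sub_cancel f g, inner_add_left, inner_add_right, inner_add_right,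
      real_inner_comm d f]
    ring
  have hresf (i : ι) : y i - ⟪f, v i⟫ = μ * c i := sub_inner_sum_smul_eq_mul hc i
  have hcross : ∑ i, 2 * (μ * c i) * ⟪d, v i⟫ = 2 * μ * ⟪f, d⟫ := by
    rw [real_inner_comm, hf, inner_sum, Finset.mul_sum]
    exact Finset.sum_congr rfl fun i _ => by rw [real_inner_smul_right]; ring
  simp only [ridgeLoss, hres, hresf, sub_sq, Finset.sum_add_distrib, Finset.sum_sub_distrib,
    hcross, hgg]
  ring

lemma ridgeLoss_sum_smul_le [DecidableEq ι] {v : ι → H} {y c : ι → ℝ} {μ : ℝ} (hμ : 0 ≤ μ)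
    (hc : (gram ℝ v + μ • (1 : Matrix ι ι ℝ)) *ᵥ c = y) (g : H) :
    ridgeLoss v y μ (∑ i, c i • v i) ≤ ridgeLoss v y μ g := by
  rw [ridgeLoss_eq_add hc g, add_assoc, le_add_iff_nonneg_right]
  have := real_inner_self_nonneg (x := g - ∑ i, c i • v i)
  positivity

lemma eq_sum_smul_of_ridgeLoss_le [DecidableEq ι] {v : ι → H} {y c : ι → ℝ} {μ : ℝ}
    (hμ : 0 < μ) (hc : (gram ℝ v + μ • (1 : Matrix ι ι ℝ)) *ᵥ c = y) {g : H}
    (hg : ridgeLoss v y μ g ≤ ridgeLoss v y μ (∑ i, c i • v i)) :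
    g = ∑ i, c i • v i := by
  rw [ridgeLoss_eq_add hc g, add_assoc, add_le_iff_nonpos_right] at hg
  have hsq : 0 ≤ ∑ i, ⟪g - ∑ i, c i • v i, v i⟫ ^ 2 := by positivity
  have hd : ⟪g - ∑ i, c i • v i, g - ∑ i, c i • v i⟫ = 0 :=
    le_antisymm (nonpos_of_mul_nonpos_right (by linarith) hμ) real_inner_self_nonneg
  exact sub_eq_zero.mp (inner_self_eq_zero.mp hd)

end RidgeRegression

theorem stmt4_general {H : Type*} [NormedAddCommGroup H] [InnerProductSpace ℝ H]
    (n : ℕ) (hn : 0 < n) (e : Fin n → H) (γ lam : ℝ) (hlam : 0 < lam)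
    (y : Fin n → ℝ)
    (G : Matrix (Fin n) (Fin n) ℝ) (hG : ∀ i j, G i j = γ ^ 2 * ⟪e i, e j⟫)
    (c : Fin n → ℝ) (hc : c = (G + ((n : ℝ) * lam) • (1 : Matrix (Fin n) (Fin n) ℝ))⁻¹.mulVec y)
    (F : H → ℝ)
    (hF : ∀ g, F g = (1/(n : ℝ)) * ∑ i, (y i - ⟪g, γ • e i⟫) ^ 2 + lam * ⟪g, g⟫)
    (fhat : H) (hfhat : fhat = ∑ i, c i • (γ • e i)) :
    (∀ g, F fhat ≤ F g) ∧ (∀ g, F g ≤ F fhat → g = fhat) ∧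
      fhat ∈ Submodule.span ℝ (Set.range e) := by
  set v : Fin n → H := fun i ↦ γ • e i
  have hμ : 0 < (n : ℝ) * lam := by positivity
  have hGv : G = gram ℝ v := by
    ext i j
    simp only [hG, v, gram_apply, real_inner_smul_left, real_inner_smul_right]
    ring
  have hcy : (gram ℝ v + ((n : ℝ) * lam) • (1 : Matrix (Fin n) (Fin n) ℝ)) *ᵥ c = y := by
    have hdet : IsUnit (gram ℝ v + ((n : ℝ) * lam) • 1).det :=
      (posDef_gram_add_smul_one v hμ).det_pos.ne'.isUnit
    rw [hc, hGv, mulVec_mulVec, mul_nonsing_inv _ hdet, one_mulVec]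
  have hFv (g : H) : F g = (n : ℝ)⁻¹ * ridgeLoss v y ((n : ℝ) * lam) g := by
    simp only [hF, ridgeLoss, v]
    field_simp
  refine ⟨fun g ↦ ?_, fun g hg ↦ ?_, ?_⟩
  · rw [hFv, hFv, hfhat]
    gcongr
    exact ridgeLoss_sum_smul_le hμ.le hcy g
  · rw [hFv, hFv, hfhat, mul_le_mul_iff_right₀ (by positivity)] at hg
    exact hfhat ▸ eq_sum_smul_of_ridgeLoss_le hμ hcy hg
  · rw [hfhat]
    exact Submodule.sum_mem _ fun i _ ↦
      Submodule.smul_mem _ _ (Submodule.smul_mem _ _ (Submodule.subset_span ⟨i, rfl⟩))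

/-- Representer theorem for renormalized ridge regression: the minimizer of
`(1/n) ∑ (yᵢ - E(g, γ eᵢ))² + λ E(g,g)` exists, is unique, lies in the span of the `eᵢ`,
and equals `∑ cᵢ γ eᵢ` with `c = (G + nλI)⁻¹ y`, `G_{ij} = γ² E(eᵢ, eⱼ)`. -/
theorem stmt4 {H : Type*} [NormedAddCommGroup H] [InnerProductSpace ℝ H] [CompleteSpace H]
    (n : ℕ) (hn : 0 < n) (e : Fin n → H) (γ lam : ℝ) (hγ : 0 < γ) (hlam : 0 < lam)
    (y : Fin n → ℝ)
    (G : Matrix (Fin n) (Fin n) ℝ) (hG : ∀ i j, G i j = γ ^ 2 * ⟪e i, e j⟫)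
    (c : Fin n → ℝ) (hc : c = (G + ((n : ℝ) * lam) • (1 : Matrix (Fin n) (Fin n) ℝ))⁻¹.mulVec y)
    (F : H → ℝ)
    (hF : ∀ g, F g = (1/(n : ℝ)) * ∑ i, (y i - ⟪g, γ • e i⟫) ^ 2 + lam * ⟪g, g⟫)
    (fhat : H) (hfhat : fhat = ∑ i, c i • (γ • e i)) :
    (∀ g, F fhat ≤ F g) ∧ (∀ g, F g ≤ F fhat → g = fhat) ∧
      fhat ∈ Submodule.span ℝ (Set.range e) :=
  stmt4_general n hn e γ lam hlam y G hG c hc F hF fhat hfhat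
end

section
/- Let H be a Hilbert space and S, T : H → H bounded self-adjoint positive semidefinite operators, λ > 0. If ‖(S + λI)^{-1/2} (S - T) (S + λI)^{-1/2}‖ ≤ q < 1, then T + λI is invertible and ‖(S + λI)^{1/2} (T + λI)^{-1} (S + λI)^{1/2}‖ ≤ 1/(1 - q). -/
open scoped RealInnerProductSpace

/-- Operator comparison via Neumann series: for self-adjoint positive semidefinite `S, T`
and `λ > 0`, with `Q` the positive square root of `S + λI` and `R` the positive square root
of `(S + λI)⁻¹`, if `‖(S+λ)^{-1/2}(S - T)(S+λ)^{-1/2}‖ ≤ q < 1` then `T + λI` is invertible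
and `‖(S+λ)^{1/2}(T+λ)⁻¹(S+λ)^{1/2}‖ ≤ 1/(1-q)`. -/
theorem stmt11 {H : Type*} [NormedAddCommGroup H] [InnerProductSpace ℝ H] [CompleteSpace H]
    (S T : H →L[ℝ] H) (hSsa : IsSelfAdjoint S) (hTsa : IsSelfAdjoint T)
    (hSpos : ∀ x : H, 0 ≤ ⟪x, S x⟫) (hTpos : ∀ x : H, 0 ≤ ⟪x, T x⟫)
    (lam : ℝ) (hlam : 0 < lam)
    (Q : H →L[ℝ] H) (hQsa : IsSelfAdjoint Q) (hQpos : ∀ x : H, 0 ≤ ⟪x, Q x⟫)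
    (hQ : Q.comp Q = S + lam • (1 : H →L[ℝ] H))
    (R : H →L[ℝ] H) (hRsa : IsSelfAdjoint R) (hRpos : ∀ x : H, 0 ≤ ⟪x, R x⟫)
    (hR1 : (S + lam • (1 : H →L[ℝ] H)).comp (R.comp R) = 1)
    (hR2 : (R.comp R).comp (S + lam • (1 : H →L[ℝ] H)) = 1)
    (q : ℝ) (hq : q < 1) (hnorm : ‖R.comp ((S - T).comp R)‖ ≤ q) :
    IsUnit (T + lam • (1 : H →L[ℝ] H)) ∧
      ‖Q.comp ((Ring.inverse (T + lam • (1 : H →L[ℝ] H))).comp Q)‖ ≤ 1/(1 - q) := by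
  set A : H →L[ℝ] H := S + lam • (1 : H →L[ℝ] H) with hA
  -- translate comp into mul
  have hQ2 : Q * Q = A := hQ
  have h1 : A * (R * R) = 1 := hR1
  have h2 : (R * R) * A = 1 := hR2
  have h1' : (A * R) * R = 1 := by rw [mul_assoc]; exact h1
  have h2' : R * (R * A) = 1 := by rw [← mul_assoc]; exact h2
  have hRA : A * R = R * A := by
    calc A * R = (A * R) * (R * (R * A)) := by rw [h2', mul_one]
      _ = ((A * R) * R) * (R * A) := by simp only [mul_assoc]
      _ = R * A := by rw [h1', one_mul]
  have hRAR : R * (A * R) = 1 := by rw [hRA]; exact h2'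
  have hRAR' : ∀ x : H →L[ℝ] H, R * (A * (R * x)) = x := fun x => by
    calc R * (A * (R * x)) = (R * (A * R)) * x := by simp only [mul_assoc]
      _ = x := by rw [hRAR, one_mul]
  have hARR : ∀ x : H →L[ℝ] H, A * (R * (R * x)) = x := fun x => by
    calc A * (R * (R * x)) = (A * (R * R)) * x := by simp only [mul_assoc]
      _ = x := by rw [h1, one_mul]
  -- R is a unit
  let Ru : (H →L[ℝ] H)ˣ := ⟨R, A * R, hRAR, h1'⟩
  -- the perturbation E
  set E : H →L[ℝ] H := R * ((S - T) * R) with hE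
  have hEq : ‖E‖ ≤ q := hnorm
  have hq0 : 0 ≤ q := le_trans (norm_nonneg E) hEq
  have hElt : ‖E‖ < 1 := lt_of_le_of_lt hEq hq
  set u : (H →L[ℝ] H)ˣ := Units.oneSub E hElt with hu
  -- B = T + lam • 1 equals (A*R)*(1-E)*(A*R)
  have hBval : ((Ru⁻¹ * u * Ru⁻¹ : (H →L[ℝ] H)ˣ) : H →L[ℝ] H)
      = T + lam • (1 : H →L[ℝ] H) := by
    have : ((Ru⁻¹ * u * Ru⁻¹ : (H →L[ℝ] H)ˣ) : H →L[ℝ] H)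
        = ((A * R) * (1 - E)) * (A * R) := rfl
    rw [this]
    have e1 : (A * R) * (A * R) = A := by
      calc (A * R) * (A * R) = (A * R) * (R * A) := by rw [hRA]
        _ = A * (R * (R * A)) := by simp only [mul_assoc]
        _ = A := by rw [h2', mul_one]
    have e2 : ((A * R) * E) * (A * R) = S - T := by
      calc ((A * R) * E) * (A * R) = ((A * R) * E) * (R * A) := by rw [hRA]
        _ = A * (R * (R * ((S - T) * (R * (R * A))))) := by
            rw [hE]; simp only [mul_assoc]
        _ = A * (R * (R * (S - T))) := by
            rw [show (S - T) * (R * (R * A)) = S - T by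
              rw [show R * (R * A) = 1 from h2', mul_one]]
        _ = S - T := hARR _
    calc ((A * R) * (1 - E)) * (A * R)
        = (A * R) * (A * R) - ((A * R) * E) * (A * R) := by
          rw [mul_sub, sub_mul, mul_one]
      _ = A - (S - T) := by rw [e1, e2]
      _ = T + lam • (1 : H →L[ℝ] H) := by rw [hA]; abel
  have hUnit : IsUnit (T + lam • (1 : H →L[ℝ] H)) := ⟨_, hBval⟩
  refine ⟨hUnit, ?_⟩
  -- the inverse
  have hinv : Ring.inverse (T + lam • (1 : H →L[ℝ] H))
      = ((Ru * u⁻¹ * Ru : (H →L[ℝ] H)ˣ) : H →L[ℝ] H) := by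
    rw [← hBval, Ring.inverse_unit]
    congr 1
  have hinv' : Ring.inverse (T + lam • (1 : H →L[ℝ] H))
      = (R * (↑u⁻¹ : H →L[ℝ] H)) * R := by rw [hinv]; rfl
  -- norm of u⁻¹
  have huinv : ‖(↑u⁻¹ : H →L[ℝ] H)‖ ≤ (1 - ‖E‖)⁻¹ := by
    have : (↑u⁻¹ : H →L[ℝ] H) = ∑' n : ℕ, E ^ n := rfl
    rw [this]
    have h := tsum_geometric_le_of_norm_lt_one E hElt
    have h1n : ‖(1 : H →L[ℝ] H)‖ ≤ 1 := ContinuousLinearMap.norm_id_le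
    linarith
  -- Q * R and R * Q are contractions
  have hQR : ‖Q * R‖ ≤ 1 := by
    refine ContinuousLinearMap.opNorm_le_bound _ zero_le_one fun x => ?_
    have hQin : ∀ a b : H, ⟪Q a, b⟫ = ⟪a, Q b⟫ := fun a b => by
      conv_lhs => rw [← hQsa.adjoint_eq]
      exact ContinuousLinearMap.adjoint_inner_left Q b a
    have hRin : ∀ a b : H, ⟪R a, b⟫ = ⟪a, R b⟫ := fun a b => by
      conv_lhs => rw [← hRsa.adjoint_eq]
      exact ContinuousLinearMap.adjoint_inner_left R b a
    have hsq : ‖(Q * R) x‖ ^ 2 = ‖x‖ ^ 2 := by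
      have : ((Q * R) x) = Q (R x) := rfl
      rw [this, ← real_inner_self_eq_norm_sq, ← real_inner_self_eq_norm_sq]
      calc ⟪Q (R x), Q (R x)⟫
          = ⟪R x, Q (Q (R x))⟫ := hQin (R x) (Q (R x))
        _ = ⟪R x, A (R x)⟫ := by
            rw [show Q (Q (R x)) = (Q * Q) (R x) from rfl, hQ2]
        _ = ⟪x, R (A (R x))⟫ := hRin x (A (R x))
        _ = ⟪x, x⟫ := by
            rw [show R (A (R x)) = (R * (A * R)) x from rfl, hRAR]; rfl
    have h0 : 0 ≤ ‖x‖ := norm_nonneg x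
    have h0' : 0 ≤ ‖(Q * R) x‖ := norm_nonneg _
    nlinarith
  have hRQ : ‖R * Q‖ ≤ 1 := by
    have : R * Q = ContinuousLinearMap.adjoint (Q * R) := by
      rw [show Q * R = Q.comp R from rfl, ContinuousLinearMap.adjoint_comp,
        hQsa.adjoint_eq, hRsa.adjoint_eq]; rfl
    rw [this, LinearIsometryEquiv.norm_map]
    exact hQR
  -- final bound
  have h1q : 0 < 1 - q := by linarith
  have hfinal : ‖Q.comp ((Ring.inverse (T + lam • (1 : H →L[ℝ] H))).comp Q)‖
      = ‖(Q * R) * ((↑u⁻¹ : H →L[ℝ] H) * (R * Q))‖ := by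
    rw [show Q.comp ((Ring.inverse (T + lam • (1 : H →L[ℝ] H))).comp Q)
      = Q * (Ring.inverse (T + lam • (1 : H →L[ℝ] H)) * Q) from rfl, hinv']
    simp only [mul_assoc]
  rw [hfinal]
  calc ‖(Q * R) * ((↑u⁻¹ : H →L[ℝ] H) * (R * Q))‖
      ≤ ‖Q * R‖ * ‖(↑u⁻¹ : H →L[ℝ] H) * (R * Q)‖ := norm_mul_le _ _
    _ ≤ ‖Q * R‖ * (‖(↑u⁻¹ : H →L[ℝ] H)‖ * ‖R * Q‖) := by
        refine mul_le_mul_of_nonneg_left (norm_mul_le _ _) (norm_nonneg _)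
    _ ≤ 1 * ((1 - ‖E‖)⁻¹ * 1) := by
        have hn1 : (0:ℝ) ≤ (1 - ‖E‖)⁻¹ := le_of_lt (inv_pos.mpr (by linarith))
        have h2n := mul_le_mul huinv hRQ (norm_nonneg _) hn1
        exact mul_le_mul hQR h2n (mul_nonneg (norm_nonneg _) (norm_nonneg _)) zero_le_one
    _ = (1 - ‖E‖)⁻¹ := by ring
    _ ≤ 1 / (1 - q) := by
        rw [one_div]
        exact inv_anti₀ h1q (by linarith)
end
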